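/- arXiv:2112.01140 — 3 statements merged into one kernel-verified Lean document; each statement's English description precedes it below -/
import Mathlib

section
/- Let G be a connected block graph, let v be a vertex of G, and let B be a block of G. Then there is a unique vertex x in B attaining the minimum distance from v to the vertices of B; that is, if x and y are vertices of B with d_G(v,x) = d_G(v,y) = min_{w ∈ V(B)} d_G(v,w), then x = y. -/
/-!
A path joining two distinct vertices of a block lies inside the block: adding it to the block
keeps the subgraph connected and free of cut vertices, so maximality absorbs it.

Suppose `x ≠ y` in `B` are both nearest to `v`, at distance `d`. Concatenating geodesics from `x`
to `v` and from `v` to `y` and shortening to a path gives an `x`–`y` path all of whose vertices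
lie on the two geodesics. Neither geodesic passes through the other endpoint, since all its
vertices but the last are closer than `d` to `v`; so the path is not the single edge `xy`, and its
second vertex is a vertex of `B` closer than `d` to `v`.
-/

open SimpleGraph

variable {V : Type*}

/-- `x` is a cut vertex of `H`: removing `x` leaves two vertices with no path
between them (i.e. disconnects `H`). -/
def IsCutVertex {W : Type*} (H : SimpleGraph W) (x : W) : Prop :=
  ¬ (H.induce {y : W | y ≠ x}).Preconnected

/-- A block of `G`: a maximal connected subgraph of `G` with no cut vertex. -/
def IsBlock (G : SimpleGraph V) (B : G.Subgraph) : Prop :=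
  B.Connected ∧ (∀ x : B.verts, ¬ IsCutVertex B.coe x) ∧
    ∀ B' : G.Subgraph, B ≤ B' → B'.Connected →
      (∀ x : B'.verts, ¬ IsCutVertex B'.coe x) → B' = B

/-- A block graph: every block is a clique. -/
def IsBlockGraph (G : SimpleGraph V) : Prop :=
  ∀ B : G.Subgraph, IsBlock G B → G.IsClique B.verts

/-- `x` is a vertex of the block `B` at minimum distance from `v` in `G`. -/
def IsNearest (G : SimpleGraph V) (v : V) (B : G.Subgraph) (x : V) : Prop :=
  x ∈ B.verts ∧ ∀ w ∈ B.verts, G.dist v x ≤ G.dist v w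

/-- `T` is the graph `T(v,G)`: obtained from `G` by deleting, from every block `B`,
each edge of `B` not incident with the nearest vertex of `B` to `v`. -/
def IsTvG (G T : SimpleGraph V) (v : V) : Prop :=
  ∀ a b : V, T.Adj a b ↔ (G.Adj a b ∧
    ∀ B : G.Subgraph, IsBlock G B → B.Adj a b →
      (IsNearest G v B a ∨ IsNearest G v B b))

/-- A Steiner `S`-tree of `G`: a connected subgraph of `G` containing all vertices
of `S`, with the minimum number of edges among such subgraphs. -/
def IsSteinerTree (G : SimpleGraph V) (S : Set V) (T : G.Subgraph) : Prop :=
  T.Connected ∧ S ⊆ T.verts ∧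
    ∀ T' : G.Subgraph, T'.Connected → S ⊆ T'.verts →
      T.edgeSet.ncard ≤ T'.edgeSet.ncard

/-- The Steiner `k`-eccentricity of `v` in `G`: the maximum, over all `k`-subsets
`S` of `V(G)` with `v ∈ S`, of the number of edges of a Steiner `S`-tree. -/
noncomputable def steinerEcc (G : SimpleGraph V) (k : ℕ) (v : V) : ℕ :=
  sSup { n | ∃ S : Finset V, S.card = k ∧ v ∈ S ∧
    ∃ T : G.Subgraph, IsSteinerTree G ↑S T ∧ T.edgeSet.ncard = n }

/-- A Steiner `k`-ecc `v`-tree: a Steiner `S`-tree, for some `k`-set `S` containing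
`v`, whose number of edges realizes the Steiner `k`-eccentricity of `v`. -/
def IsSteinerKEccTree (G : SimpleGraph V) (k : ℕ) (v : V) (T₀ : G.Subgraph) : Prop :=
  ∃ S : Finset V, S.card = k ∧ v ∈ S ∧ IsSteinerTree G ↑S T₀ ∧
    T₀.edgeSet.ncard = steinerEcc G k v

/-- The Steiner distance of `S` in `G`. -/
noncomputable def steinerDist (G : SimpleGraph V) (S : Set V) : ℕ :=
  sInf { n | ∃ T : G.Subgraph, T.Connected ∧ S ⊆ T.verts ∧ T.edgeSet.ncard = n }

namespace SimpleGraph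

variable {G : SimpleGraph V}

namespace Walk

lemma dist_lt_length_of_mem_support {u v w : V} (p : G.Walk u v) (hw : w ∈ p.support)
    (hne : w ≠ v) : G.dist u w < p.length := by
  classical
  exact (dist_le _).trans_lt (p.length_takeUntil_lt_length hw hne)

lemma exists_mem_support_ne_ne {x y : V} (p : G.Walk x y) (hxy : x ≠ y)
    (he : s(x, y) ∉ p.edges) : ∃ u ∈ p.support, u ≠ x ∧ u ≠ y := by
  have hnil : ¬p.Nil := not_nil_of_ne hxy
  refine ⟨p.snd, p.getVert_mem_support 1, (p.adj_snd hnil).ne.symm, fun h => he ?_⟩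
  simpa [h] using p.mk_start_snd_mem_edges hnil

lemma toSubgraph_le_deleteVerts {H : G.Subgraph} {u v z : V} {w : G.Walk u v}
    (h : w.toSubgraph ≤ H) (hz : z ∉ w.support) : w.toSubgraph ≤ H.deleteVerts {z} := by
  have hv : ∀ a ∈ w.toSubgraph.verts, a ∈ H.verts ∧ a ∉ ({z} : Set V) := fun a ha =>
    ⟨h.1 ha, fun haz => hz (haz ▸ (mem_verts_toSubgraph w).1 ha)⟩
  refine ⟨fun a ha => hv a ha, fun a b hab => Subgraph.deleteVerts_adj.2 ?_⟩
  exact ⟨(hv a hab.fst_mem).1, (hv a hab.fst_mem).2, (hv b hab.snd_mem).1, (hv b hab.snd_mem).2,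
    h.2 hab⟩

lemma IsPath.notMem_support_takeUntil_or_dropUntil [DecidableEq V] {x y p z : V}
    {W : G.Walk x y} (hW : W.IsPath) (hp : p ∈ W.support) (hzp : z ≠ p) :
    z ∉ (W.takeUntil p hp).support ∨ z ∉ (W.dropUntil p hp).support := by
  by_contra! ⟨h₁, h₂⟩
  have hnd := hW.support_nodup
  rw [← W.take_spec hp, support_append] at hnd
  rw [← cons_tail_support, List.mem_cons] at h₂
  exact List.disjoint_of_nodup_append hnd h₁ (h₂.resolve_left hzp)

lemma IsPath.exists_walk_to_start_or_end_avoiding {x y p z : V} {W : G.Walk x y}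
    (hW : W.IsPath) (hp : p ∈ W.support) (hzp : z ≠ p) :
    (∃ w : G.Walk p x, w.toSubgraph ≤ W.toSubgraph.deleteVerts {z}) ∨
      ∃ w : G.Walk p y, w.toSubgraph ≤ W.toSubgraph.deleteVerts {z} := by
  classical
  have hsplit : W.toSubgraph = (W.takeUntil p hp).toSubgraph ⊔ (W.dropUntil p hp).toSubgraph := by
    rw [← toSubgraph_append, take_spec]
  rcases hW.notMem_support_takeUntil_or_dropUntil hp hzp with h | h
  · refine Or.inl ⟨(W.takeUntil p hp).reverse, ?_⟩
    rw [toSubgraph_reverse]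
    exact toSubgraph_le_deleteVerts (hsplit ▸ le_sup_left) h
  · exact Or.inr ⟨W.dropUntil p hp, toSubgraph_le_deleteVerts (hsplit ▸ le_sup_right) h⟩

end Walk

namespace Subgraph

lemma preconnected_of_forall_exists_walk {H : G.Subgraph} (c : V)
    (h : ∀ p ∈ H.verts, ∃ w : G.Walk p c, w.toSubgraph ≤ H) : H.Preconnected := by
  rw [preconnected_iff_forall_exists_walk_subgraph]
  intro p q hp hq
  obtain ⟨w₁, h₁⟩ := h p hp
  obtain ⟨w₂, h₂⟩ := h q hq
  exact ⟨w₁.append w₂.reverse, by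
    rw [Walk.toSubgraph_append, Walk.toSubgraph_reverse]; exact sup_le h₁ h₂⟩

lemma preconnected_deleteVerts_sup_toSubgraph {H : G.Subgraph}
    (hH : ∀ z, (H.deleteVerts {z}).Preconnected) {x y : V} (hx : x ∈ H.verts)
    (hy : y ∈ H.verts) (hxy : x ≠ y) {W : G.Walk x y} (hW : W.IsPath) (z : V) :
    ((H ⊔ W.toSubgraph).deleteVerts {z}).Preconnected := by
  obtain ⟨c, hcH, hcz⟩ : ∃ c ∈ H.verts, c ≠ z := by
    by_cases hxz : x = z
    · exact ⟨y, hy, fun hyz => hxy (hxz.trans hyz.symm)⟩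
    · exact ⟨x, hx, hxz⟩
  have toHub : ∀ p ∈ (H.deleteVerts {z}).verts,
      ∃ w : G.Walk p c, w.toSubgraph ≤ (H ⊔ W.toSubgraph).deleteVerts {z} := by
    intro p hp
    obtain ⟨w, hw⟩ :=
      (preconnected_iff_forall_exists_walk_subgraph _).1 (hH z) hp ⟨hcH, hcz⟩
    exact ⟨w, hw.trans (deleteVerts_mono le_sup_left)⟩
  have viaEnd : ∀ {p e : V}, e ∈ H.verts → ∀ w : G.Walk p e,
      w.toSubgraph ≤ W.toSubgraph.deleteVerts {z} →
      ∃ w : G.Walk p c, w.toSubgraph ≤ (H ⊔ W.toSubgraph).deleteVerts {z} := by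
    intro p e he w hw
    obtain ⟨w', hw'⟩ := toHub e ⟨he, (hw.1 w.end_mem_verts_toSubgraph).2⟩
    exact ⟨w.append w', by
      rw [Walk.toSubgraph_append]; exact sup_le (hw.trans (deleteVerts_mono le_sup_right)) hw'⟩
  refine preconnected_of_forall_exists_walk c fun p ⟨hp, hpz⟩ => ?_
  rcases hp with hp | hp
  · exact toHub p ⟨hp, hpz⟩
  · rcases hW.exists_walk_to_start_or_end_avoiding ((Walk.mem_verts_toSubgraph W).1 hp)
      (Ne.symm hpz) with ⟨w, hw⟩ | ⟨w, hw⟩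
    · exact viaEnd hx w hw
    · exact viaEnd hy w hw

end Subgraph

end SimpleGraph

lemma isCutVertex_coe_iff {G : SimpleGraph V} {H : G.Subgraph} (z : H.verts) :
    IsCutVertex H.coe z ↔ ¬ (H.deleteVerts {(z : V)}).Preconnected := by
  have hs : {y : H.verts | y ≠ z} = {y : H.verts | (y : V) ∉ ({(z : V)} : Set V)} := by
    ext; simp [Subtype.ext_iff]
  rw [IsCutVertex, hs, Subgraph.preconnected_iff,
    Iso.preconnected_iff (Subgraph.coeDeleteVertsIso (G' := H) {(z : V)})]

lemma forall_not_isCutVertex_iff {G : SimpleGraph V} {H : G.Subgraph} (hH : H.Connected) :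
    (∀ z : H.verts, ¬ IsCutVertex H.coe z) ↔ ∀ z, (H.deleteVerts {z}).Preconnected := by
  refine ⟨fun h z => ?_, fun h z => by rw [isCutVertex_coe_iff, not_not]; exact h z⟩
  by_cases hz : z ∈ H.verts
  · exact not_not.1 ((isCutVertex_coe_iff ⟨z, hz⟩).not.1 (h ⟨z, hz⟩))
  · rw [← Subgraph.deleteVerts_inter_verts_left_eq, Set.inter_singleton_eq_empty.2 hz,
      Subgraph.deleteVerts_empty]
    exact hH.preconnected

lemma IsBlock.toSubgraph_le {G : SimpleGraph V} {B : G.Subgraph} (hB : IsBlock G B) {x y : V}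
    (hx : x ∈ B.verts) (hy : y ∈ B.verts) (hxy : x ≠ y) {W : G.Walk x y} (hW : W.IsPath) :
    W.toSubgraph ≤ B := by
  have hconn : (B ⊔ W.toSubgraph).Connected :=
    Subgraph.connected_sup hB.1.preconnected W.toSubgraph_connected.preconnected
      ⟨x, hx, W.start_mem_verts_toSubgraph⟩
  have hcut := (forall_not_isCutVertex_iff hconn).2 <|
    Subgraph.preconnected_deleteVerts_sup_toSubgraph
      ((forall_not_isCutVertex_iff hB.1).1 hB.2.1) hx hy hxy hW
  exact hB.2.2 _ le_sup_left hconn hcut ▸ le_sup_right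

theorem steiner_stmt_0_general (G : SimpleGraph V) (hG : G.Connected)
    (v : V) (B : G.Subgraph) (hB : IsBlock G B)
    (x y : V) (hx : IsNearest G v B x) (hy : IsNearest G v B y) : x = y := by
  classical
  by_contra hxy
  have hd : G.dist v x = G.dist v y := le_antisymm (hx.2 y hy.1) (hy.2 x hx.1)
  obtain ⟨P, hP⟩ := hG.exists_walk_length_eq_dist v x
  obtain ⟨Q, hQ⟩ := hG.exists_walk_length_eq_dist v y
  have hyP : y ∉ P.support := fun h =>
    (P.dist_lt_length_of_mem_support h (Ne.symm hxy)).ne (hP.trans hd).symm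
  have hxQ : x ∉ Q.support := fun h =>
    (Q.dist_lt_length_of_mem_support h hxy).ne (hQ.trans hd.symm).symm
  set W := (P.reverse.append Q).bypass
  have hxyW : s(x, y) ∉ W.edges := by
    intro h
    rcases List.mem_append.1 (Walk.edges_append _ _ ▸ Walk.edges_bypass_subset_edges _ h)
      with h | h
    · exact hyP (P.snd_mem_support_of_mem_edges (by simpa using h))
    · exact hxQ (Q.fst_mem_support_of_mem_edges h)
  obtain ⟨u, huW, hux, huy⟩ := W.exists_mem_support_ne_ne hxy hxyW
  have huB : u ∈ B.verts := (hB.toSubgraph_le hx.1 hy.1 hxy (Walk.bypass_isPath _)).1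
    ((Walk.mem_verts_toSubgraph W).2 huW)
  have hu_closer : G.dist v u < G.dist v x := by
    rcases (Walk.mem_support_append_iff _ _).1 (Walk.support_bypass_subset_support _ huW)
      with h | h
    · exact hP ▸ P.dist_lt_length_of_mem_support (by simpa using h) hux
    · exact hd ▸ hQ ▸ Q.dist_lt_length_of_mem_support h huy
  exact (hx.2 u huB).not_gt hu_closer

/-- In a connected block graph, every block has a unique vertex
nearest to a given vertex `v`. -/
theorem steiner_stmt_0 [Fintype V] (G : SimpleGraph V) (hG : G.Connected)
    (hBG : IsBlockGraph G) (v : V) (B : G.Subgraph) (hB : IsBlock G B)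
    (x y : V) (hx : IsNearest G v B x) (hy : IsNearest G v B y) : x = y :=
  steiner_stmt_0_general G hG v B hB x y hx hy
end

section
/- Let G be a connected block graph and v ∈ V(G). Let T(v,G) be the spanning subgraph of G obtained by deleting, from every block B of G, each edge of B that is not incident with Near_G(v,B), where Near_G(v,B) is the (unique) vertex of B nearest to v. Then T(v,G) is a spanning tree of G (it is connected and acyclic and contains all vertices of G). -/
open SimpleGraph

variable {V : Type*}

/-!
Measure levels by `dist v`. Every cycle of `G` has no cut vertex, so it lies in a block, which is
a clique. If a block had two vertices nearest to `v`, geodesics from `v` to them together with the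
edge joining them would contain a cycle through a vertex of that block strictly closer to `v`;
so each block has a unique nearest vertex, and its other vertices lie exactly one level higher.
Hence each `w ≠ v` is `T`-adjacent to its predecessor on a geodesic, and `T` is connected. A cycle
of `T` lies in one block `B`, and every `T`-edge inside `B` is incident with the nearest vertex
of `B`; but every cycle has an edge avoiding any given vertex.
-/

open SimpleGraph Walk

section Blocks

variable {G : SimpleGraph V} {B : G.Subgraph}

lemma not_isCutVertex_of_forall_adj {W : Type*} {H : SimpleGraph W} {c u : W} (hcu : c ≠ u)
    (hc : ∀ w, w ≠ c → H.Adj w c) : ¬ IsCutVertex H u := by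
  have reach : ∀ w : {y | y ≠ u}, (H.induce {y | y ≠ u}).Reachable w ⟨c, hcu⟩ := by
    rintro ⟨w, hw⟩
    by_cases hwc : w = c
    · subst hwc; rfl
    · exact Adj.reachable (hc w hwc)
  exact not_not.mpr fun a b => (reach a).trans (reach b).symm

lemma not_isCutVertex_of_forall_exists_walk {H : G.Subgraph} (x : H.verts)
    (h : ∀ p r, p ∈ H.verts → r ∈ H.verts → p ≠ x → r ≠ x →
      ∃ W : G.Walk p r, W.toSubgraph ≤ H ∧ (x : V) ∉ W.support) :
    ¬ IsCutVertex H.coe x := by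
  refine not_not.mpr fun ⟨⟨p, hp⟩, hpx⟩ ⟨⟨r, hr⟩, hrx⟩ => ?_
  obtain ⟨W, hWH, hxW⟩ := h p r hp hr (fun h' => hpx (Subtype.ext h'))
    (fun h' => hrx (Subtype.ext h'))
  let f : W.toSubgraph.coe →g H.coe.induce {y | y ≠ x} :=
    { toFun := fun z => ⟨⟨z, hWH.1 z.2⟩, fun h' =>
        hxW (congrArg Subtype.val h' ▸ W.mem_verts_toSubgraph.mp z.2)⟩
      map_rel' := fun hab => hWH.2 hab }
  exact (W.toSubgraph_connected.preconnected ⟨p, W.start_mem_verts_toSubgraph⟩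
    ⟨r, W.end_mem_verts_toSubgraph⟩).map f

lemma exists_isBlock_ge [Finite V] {H : G.Subgraph} (hc : H.Connected)
    (hnc : ∀ x : H.verts, ¬ IsCutVertex H.coe x) : ∃ B, IsBlock G B ∧ H ≤ B := by
  obtain ⟨B, hHB, hB⟩ := Finite.exists_le_maximal
    (p := fun K : G.Subgraph => K.Connected ∧ ∀ x : K.verts, ¬ IsCutVertex K.coe x) ⟨hc, hnc⟩
  exact ⟨B, ⟨hB.prop.1, hB.prop.2, fun B' hle hc' hnc' =>
    (hB.le_of_ge ⟨hc', hnc'⟩ hle).antisymm hle⟩, hHB⟩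

lemma IsBlock.isInduced (hB : IsBlock G B) : B.IsInduced := by
  intro a ha b hb hab
  have hle : B ≤ (⊤ : G.Subgraph).induce B.verts := Subgraph.le_induce_top_verts
  have heq := hB.2.2 _ hle (hB.1.mono hle rfl) fun x hcut =>
    hB.2.1 x fun hpre => hcut fun p q => (hpre p q).mono fun _ _ h => hle.2 h
  exact heq ▸ ⟨ha, hb, hab⟩

lemma IsBlock.exists_isNearest [Finite V] (hB : IsBlock G B) (v : V) :
    ∃ x, IsNearest G v B x :=
  let ⟨x, hx, hmin⟩ := B.verts.exists_min_image (G.dist v) B.verts.toFinite hB.1.nonempty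
  ⟨x, hx, hmin⟩

end Blocks

lemma SimpleGraph.reachable_of_forall_exists_adj_lt {H : SimpleGraph V} (f : V → ℕ) {r : V}
    (h : ∀ w, w ≠ r → ∃ u, H.Adj w u ∧ f u < f w) (w : V) : H.Reachable w r := by
  induction hn : f w using Nat.strong_induction_on generalizing w with
  | _ n ih =>
    by_cases hwr : w = r
    · exact hwr ▸ Reachable.refl _
    · obtain ⟨u, hwu, hu⟩ := h w hwr
      exact hwu.reachable.trans (ih _ (hn ▸ hu) u rfl)

namespace SimpleGraph.Walk

variable {G : SimpleGraph V}

lemma dist_lt_of_mem_support {u x z : V} (P : G.Walk u x) (hP : P.length = G.dist u x)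
    (hz : z ∈ P.support) (hzx : z ≠ x) : G.dist u z < G.dist u x := by
  classical
  exact hP ▸ (dist_le _).trans_lt (P.length_takeUntil_lt_length hz hzx)

lemma exists_isCycle_cons {x y : V} (h : G.Adj x y) (W : G.Walk y x) (hW : s(x, y) ∉ W.edges) :
    ∃ p : G.Walk y x, (cons h p).IsCycle ∧ p.support ⊆ W.support := by
  classical
  exact ⟨W.bypass, (cons_isCycle_iff _ h).mpr
    ⟨W.bypass_isPath, fun h' => hW (W.edges_bypass_subset_edges h')⟩,
    W.support_bypass_subset_support⟩

lemma IsCycle.exists_mem_edges_ne {u : V} {c : G.Walk u u} (hc : c.IsCycle) {y : V}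
    (hy : y ∈ c.support) (x : V) : ∃ w, w ≠ x ∧ s(y, w) ∈ c.edges := by
  classical
  obtain ⟨w, hw, hwx⟩ := (c.toSubgraph.neighborSet y).exists_ne_of_one_lt_ncard
    (by rw [hc.ncard_neighborSet_toSubgraph_eq_two hy]; norm_num) x
  exact ⟨w, hwx, adj_toSubgraph_iff_mem_edges.mp hw⟩

lemma IsCycle.exists_mem_edges_not_mem {u : V} {c : G.Walk u u} (hc : c.IsCycle) (x : V) :
    ∃ a b, s(a, b) ∈ c.edges ∧ a ≠ x ∧ b ≠ x := by
  obtain ⟨w, hwx, huw⟩ := hc.exists_mem_edges_ne c.start_mem_support x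
  rcases ne_or_eq u x with hux | rfl
  · exact ⟨u, w, huw, hux, hwx⟩
  · obtain ⟨w', hw'x, hww'⟩ := hc.exists_mem_edges_ne (c.snd_mem_support_of_mem_edges huw) u
    exact ⟨w, w', hww', hwx, hw'x⟩

lemma IsCycle.not_isCutVertex {u : V} {c : G.Walk u u} (hc : c.IsCycle)
    (x : c.toSubgraph.verts) : ¬ IsCutVertex c.toSubgraph.coe x := by
  classical
  have hx : (x : V) ∈ c.support := c.mem_verts_toSubgraph.mp x.2
  obtain ⟨w, hxw, q, hq⟩ := not_nil_iff.mp (hc.rotate hx).not_nil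
  have hq_path : q.IsPath := ((cons_isCycle_iff q hxw).mp (hq ▸ hc.rotate hx)).1
  have hcq : c.toSubgraph = (cons hxw q).toSubgraph :=
    (c.toSubgraph_rotate hx).symm.trans (congrArg Walk.toSubgraph hq)
  -- Going around the cycle from `x`, every other vertex is reached before returning to `x`.
  have reach : ∀ p ∈ c.toSubgraph.verts, p ≠ x → ∃ hp : p ∈ q.support,
      (q.takeUntil p hp).toSubgraph ≤ c.toSubgraph ∧ (x : V) ∉ (q.takeUntil p hp).support := by
    intro p hp hpx
    have hp : p ∈ q.support := by
      have := (cons hxw q).mem_verts_toSubgraph.mp (hcq ▸ hp)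
      rw [support_cons, List.mem_cons] at this
      exact this.resolve_left hpx
    refine ⟨hp, ?_, endpoint_notMem_support_takeUntil hq_path hp (Ne.symm hpx)⟩
    calc (q.takeUntil p hp).toSubgraph
        ≤ ((q.takeUntil p hp).append (q.dropUntil p hp)).toSubgraph := by
          rw [toSubgraph_append]; exact le_sup_left
      _ = q.toSubgraph := by rw [take_spec]
      _ ≤ (cons hxw q).toSubgraph := le_sup_right
      _ = c.toSubgraph := hcq.symm
  refine not_isCutVertex_of_forall_exists_walk x fun p r hp hr hpx hrx => ?_
  obtain ⟨hp, hpc, hxp⟩ := reach p hp hpx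
  obtain ⟨hr, hrc, hxr⟩ := reach r hr hrx
  refine ⟨(q.takeUntil p hp).reverse.append (q.takeUntil r hr), ?_, ?_⟩
  · rw [toSubgraph_append, toSubgraph_reverse]
    exact sup_le hpc hrc
  · rw [mem_support_append_iff, support_reverse, List.mem_reverse]
    tauto

lemma IsCycle.exists_isBlock [Finite V] {u : V} {c : G.Walk u u} (hc : c.IsCycle) :
    ∃ B, IsBlock G B ∧ ∀ z ∈ c.support, z ∈ B.verts := by
  obtain ⟨B, hB, hcB⟩ := exists_isBlock_ge c.toSubgraph_connected hc.not_isCutVertex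
  exact ⟨B, hB, fun z hz => hcB.1 (c.mem_verts_toSubgraph.mpr hz)⟩

end SimpleGraph.Walk

namespace IsBlockGraph

variable {G : SimpleGraph V} {B : G.Subgraph}

lemma adj_of_mem (hBG : IsBlockGraph G) (hB : IsBlock G B) {a b : V} (ha : a ∈ B.verts)
    (hb : b ∈ B.verts) (hab : a ≠ b) : B.Adj a b :=
  hB.isInduced ha hb (hBG B hB ha hb hab)

lemma eq_of_mem_of_mem (hBG : IsBlockGraph G) {B₁ B₂ : G.Subgraph} (h₁ : IsBlock G B₁)
    (h₂ : IsBlock G B₂) {x y : V} (hxy : x ≠ y) (hx₁ : x ∈ B₁.verts) (hy₁ : y ∈ B₁.verts)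
    (hx₂ : x ∈ B₂.verts) (hy₂ : y ∈ B₂.verts) : B₁ = B₂ := by
  have hconn : (B₁ ⊔ B₂).Connected :=
    Subgraph.connected_sup h₁.1.preconnected h₂.1.preconnected ⟨x, hx₁, hx₂⟩
  -- Each common vertex of `B₁` and `B₂` is adjacent to every other vertex of `B₁ ⊔ B₂`.
  have hnc : ∀ u : (B₁ ⊔ B₂).verts, ¬ IsCutVertex (B₁ ⊔ B₂).coe u := by
    intro u
    have key : ∀ c, c ∈ B₁.verts → c ∈ B₂.verts → c ≠ u → ¬ IsCutVertex (B₁ ⊔ B₂).coe u :=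
      fun c hc₁ hc₂ hcu => not_isCutVertex_of_forall_adj (c := ⟨c, Or.inl hc₁⟩)
        (fun h => hcu (congrArg Subtype.val h)) fun ⟨w, hw⟩ hwc => by
          have hne : w ≠ c := fun h => hwc (Subtype.ext h)
          rcases hw with hw | hw
          · exact Or.inl (hBG.adj_of_mem h₁ hw hc₁ hne)
          · exact Or.inr (hBG.adj_of_mem h₂ hw hc₂ hne)
    by_cases hux : (u : V) = x
    · exact key y hy₁ hy₂ (hux ▸ hxy.symm)
    · exact key x hx₁ hx₂ (Ne.symm hux)
  have h₂₁ : B₂ ≤ B₁ := le_sup_right.trans (h₁.2.2 _ le_sup_left hconn hnc).le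
  exact h₂.2.2 B₁ h₂₁ h₁.1 h₁.2.1

variable {v : V}

lemma dist_le_add_one (hBG : IsBlockGraph G) (hG : G.Connected) (hB : IsBlock G B) {x w : V}
    (hx : IsNearest G v B x) (hw : w ∈ B.verts) : G.dist v w ≤ G.dist v x + 1 := by
  rcases eq_or_ne w x with rfl | hwx
  · omega
  · calc G.dist v w ≤ G.dist v x + G.dist x w := hG.dist_triangle
      _ = G.dist v x + 1 := by rw [dist_eq_one_iff_adj.mpr (hBG B hB hx.1 hw hwx.symm)]

lemma isNearest_unique [Finite V] (hBG : IsBlockGraph G) (hG : G.Connected) (hB : IsBlock G B)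
    {x y : V} (hx : IsNearest G v B x) (hy : IsNearest G v B y) : x = y := by
  by_contra hxy
  have hdist : G.dist v x = G.dist v y := (hx.2 y hy.1).antisymm (hy.2 x hx.1)
  obtain ⟨P, -, hP⟩ := hG.exists_path_of_dist v x
  obtain ⟨Q, -, hQ⟩ := hG.exists_path_of_dist v y
  have hyP : y ∉ P.support := fun h => (P.dist_lt_of_mem_support hP h (Ne.symm hxy)).ne hdist.symm
  have hxQ : x ∉ Q.support := fun h => (Q.dist_lt_of_mem_support hQ h hxy).ne hdist
  have hW : s(x, y) ∉ (Q.reverse.append P).edges := by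
    rw [edges_append, edges_reverse, List.mem_append, List.mem_reverse]
    rintro (h | h)
    · exact hxQ (Q.fst_mem_support_of_mem_edges h)
    · exact hyP (P.snd_mem_support_of_mem_edges h)
  have hadj : G.Adj x y := hBG B hB hx.1 hy.1 hxy
  obtain ⟨p, hc, hpW⟩ := exists_isCycle_cons hadj _ hW
  obtain ⟨B', hB', hcB'⟩ := hc.exists_isBlock
  have hBB' : B' = B := hBG.eq_of_mem_of_mem hB' hB hxy (hcB' x (start_mem_support _))
    (hcB' y (by simp)) hx.1 hy.1
  -- The cycle leaves `{x, y}`, and off `{x, y}` it runs along `P` or `Q`, below the level of `x`.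
  obtain ⟨z, hz, hzx, hzy⟩ : ∃ z ∈ p.support, z ≠ x ∧ z ≠ y := by
    obtain ⟨a, b, hab, hax, hbx⟩ := hc.exists_mem_edges_not_mem x
    have mem : ∀ z ∈ (cons hadj p).support, z ≠ x → z ∈ p.support := by
      intro z hz hzx
      rw [support_cons, List.mem_cons] at hz
      exact hz.resolve_left hzx
    rcases eq_or_ne a y with rfl | hay
    · exact ⟨b, mem b (snd_mem_support_of_mem_edges _ hab) hbx, hbx,
        (adj_of_mem_edges _ hab).ne.symm⟩
    · exact ⟨a, mem a (fst_mem_support_of_mem_edges _ hab) hax, hax, hay⟩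
  have hzB : z ∈ B.verts := hBB' ▸ hcB' z (by simp [hz])
  have hlow : G.dist v z < G.dist v x := by
    rcases (mem_support_append_iff _ _).mp (hpW hz) with h | h
    · rw [support_reverse, List.mem_reverse] at h
      exact hdist ▸ Q.dist_lt_of_mem_support hQ h hzy
    · exact P.dist_lt_of_mem_support hP h hzx
  exact (hx.2 z hzB).not_gt hlow

end IsBlockGraph

namespace IsTvG

variable {G T : SimpleGraph V} {v : V}

lemma le (hT : IsTvG G T v) : T ≤ G := fun a b h => ((hT a b).mp h).1

lemma exists_adj_dist_lt [Finite V] (hT : IsTvG G T v) (hG : G.Connected)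
    (hBG : IsBlockGraph G) {w : V} (hw : w ≠ v) : ∃ u, T.Adj w u ∧ G.dist v u < G.dist v w := by
  obtain ⟨P, hP⟩ := hG.exists_walk_length_eq_dist w v
  cases P with
  | nil => exact absurd rfl hw
  | @cons _ u _ hwu Q =>
    have hu : G.dist v u + 1 ≤ G.dist v w := by
      rw [dist_comm, dist_comm (u := v), ← hP, length_cons]
      exact Nat.succ_le_succ (dist_le Q)
    -- In any block through `wu`, `w` is at most one level above the nearest vertex, so `u` is
    -- nearest too.
    refine ⟨u, (hT w u).mpr ⟨hwu, fun B hB hBwu => Or.inr ⟨B.edge_vert hBwu.symm, ?_⟩⟩, hu⟩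
    obtain ⟨x, hx⟩ := hB.exists_isNearest v
    have hwx := hBG.dist_le_add_one hG hB hx (B.edge_vert hBwu)
    exact fun z hz => by have := hx.2 z hz; omega

lemma connected [Finite V] (hT : IsTvG G T v) (hG : G.Connected) (hBG : IsBlockGraph G) :
    T.Connected :=
  (connected_iff_exists_forall_reachable T).mpr ⟨v, fun w =>
    (reachable_of_forall_exists_adj_lt (G.dist v)
      (fun _ hw => hT.exists_adj_dist_lt hG hBG hw) w).symm⟩

lemma isAcyclic [Finite V] (hT : IsTvG G T v) (hG : G.Connected) (hBG : IsBlockGraph G) :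
    T.IsAcyclic := by
  intro u c hc
  obtain ⟨B, hB, hcB⟩ := (hc.mapLe hT.le).exists_isBlock
  rw [support_mapLe_eq_support] at hcB
  obtain ⟨x, hx⟩ := hB.exists_isNearest v
  obtain ⟨a, b, hab, hax, hbx⟩ := hc.exists_mem_edges_not_mem x
  have haB := hcB a (c.fst_mem_support_of_mem_edges hab)
  have hbB := hcB b (c.snd_mem_support_of_mem_edges hab)
  obtain ⟨hGab, hnear⟩ := (hT a b).mp (c.adj_of_mem_edges hab)
  rcases hnear B hB (hB.isInduced haB hbB hGab) with ha | hb
  · exact hax (hBG.isNearest_unique hG hB ha hx)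
  · exact hbx (hBG.isNearest_unique hG hB hb hx)

end IsTvG

/-- For a connected block graph `G` and `v ∈ V(G)`, the graph
`T(v,G)` is a spanning tree of `G`. -/
theorem steiner_stmt_2 [Fintype V] (G : SimpleGraph V) (hG : G.Connected)
    (hBG : IsBlockGraph G) (v : V) (T : SimpleGraph V) (hT : IsTvG G T v) :
    T.IsTree :=
  ⟨hT.connected hG hBG, hT.isAcyclic hG hBG⟩
end

section
/- There exist a connected unicyclic graph G (a connected graph whose number of edges equals its number of vertices, equivalently cyclomatic number 1) and a vertex v ∈ V(G) such that no Steiner 3-ecc v-tree of G contains a Steiner 2-ecc v-tree of G as a subgraph; that is, the property that every Steiner k-ecc v-tree contains a Steiner (k−1)-ecc v-tree fails already on unicyclic graphs for k = 3. -/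
open SimpleGraph

variable {V : Type*}

/-!
The graph is the 7-cycle `0 ⋯ 6` with a pendant vertex `7` at `0` and `8` at `2`, and `v = 4`.
A connected subgraph containing a pendant vertex and another vertex contains its pendant edge,
and one containing two cycle vertices contains one of the two cycle arcs joining them (it meets
every cut separating them, in particular every pair of edges, one from each arc). Hence a
connected subgraph through `4` and `7` has at least `4` edges, and exactly `4` only if it uses the
edge `45` (arc `4-5-6-0`); through `4, 7, 8` it has at least `6`, and exactly `6` only without
`45` (arc `4-3-2-1-0`). Every other `2`-set, resp. `3`-set, containing `4` lies on a walk with at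
most `3`, resp. `5`, distinct edges, so the Steiner `2`-ecc `4`-trees are Steiner `{4, 7}`-trees
with `4` edges and contain `45`, while the Steiner `3`-ecc `4`-trees are Steiner
`{4, 7, 8}`-trees with `6` edges and avoid it.
-/

namespace SimpleGraph.Subgraph.Connected

variable {G : SimpleGraph V} {T : G.Subgraph}

theorem exists_adj_mem_not_mem (hT : T.Connected) {C : Set V} {a b : V} (ha : a ∈ T.verts)
    (hb : b ∈ T.verts) (haC : a ∈ C) (hbC : b ∉ C) : ∃ x y, T.Adj x y ∧ x ∈ C ∧ y ∉ C := by
  obtain ⟨p⟩ := hT.preconnected ⟨a, ha⟩ ⟨b, hb⟩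
  obtain ⟨d, -, hd₁, hd₂⟩ := p.exists_boundary_dart (Subtype.val ⁻¹' C) haC hbC
  exact ⟨d.fst, d.snd, d.adj, hd₁, hd₂⟩

theorem mem_edgeSet_of_forall_adj_eq (hT : T.Connected) {x y z : V} (hx : x ∈ T.verts)
    (hy : y ∈ T.verts) (hxy : x ≠ y) (hz : ∀ w, G.Adj x w → w = z) : s(x, z) ∈ T.edgeSet := by
  obtain ⟨a, b, hab, rfl, -⟩ :=
    hT.exists_adj_mem_not_mem hx hy (Set.mem_singleton x) (Set.mem_singleton_iff.not.2 hxy.symm)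
  rwa [← hz b hab.adj_sub]

end SimpleGraph.Subgraph.Connected

theorem exists_connected_of_isChain [DecidableEq V] {G : SimpleGraph V} {S : Finset V}
    {l : List V} (hne : l ≠ []) (hl : l.IsChain G.Adj) (hS : S ⊆ l.toFinset) :
    ∃ T : G.Subgraph, T.Connected ∧ ↑S ⊆ T.verts ∧
      T.edgeSet.ncard = (Walk.ofSupport l hne hl).edges.toFinset.card := by
  set p := Walk.ofSupport l hne hl
  refine ⟨p.toSubgraph, p.toSubgraph_connected, fun x hx => p.mem_verts_toSubgraph.2 ?_, ?_⟩
  · rw [Walk.support_ofSupport hne hl]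
    exact List.mem_toFinset.1 (hS hx)
  · have hp : p.edgeSet = ↑p.edges.toFinset := by ext; simp
    rw [p.edgeSet_toSubgraph, hp, Set.ncard_coe_finset]

theorem exists_isSteinerTree {G : SimpleGraph V} {S : Set V}
    (h : ∃ T : G.Subgraph, T.Connected ∧ S ⊆ T.verts) : ∃ T, IsSteinerTree G S T := by
  classical
  have hn : ∃ n, ∃ T : G.Subgraph, T.Connected ∧ S ⊆ T.verts ∧ T.edgeSet.ncard = n :=
    let ⟨T, hc, hS⟩ := h; ⟨_, T, hc, hS, rfl⟩
  obtain ⟨T, hc, hS, hT⟩ := Nat.find_spec hn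
  exact ⟨T, hc, hS, fun T' hc' hS' => hT ▸ Nat.find_min' hn ⟨T', hc', hS', rfl⟩⟩

theorem IsSteinerTree.ncard_le_of_isChain [DecidableEq V] {G : SimpleGraph V} {S : Finset V}
    {T : G.Subgraph} (hT : IsSteinerTree G ↑S T) {l : List V} (hne : l ≠ [])
    (hl : l.IsChain G.Adj) (hS : S ⊆ l.toFinset) :
    T.edgeSet.ncard ≤ (Walk.ofSupport l hne hl).edges.toFinset.card := by
  obtain ⟨T', hc, hST', hT'⟩ := exists_connected_of_isChain hne hl hS
  exact hT' ▸ hT.2.2 T' hc hST'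

theorem le_steinerEcc [Finite V] {G : SimpleGraph V} {k m : ℕ} {v : V} {S : Finset V}
    (hS : S.card = k) (hv : v ∈ S) (hconn : ∃ T : G.Subgraph, T.Connected ∧ ↑S ⊆ T.verts)
    (hm : ∀ T : G.Subgraph, T.Connected → ↑S ⊆ T.verts → m ≤ T.edgeSet.ncard) :
    m ≤ steinerEcc G k v := by
  obtain ⟨T, hT⟩ := exists_isSteinerTree hconn
  refine (hm T hT.1 hT.2.1).trans (le_csSup ⟨G.edgeSet.ncard, ?_⟩ ⟨S, hS, hv, T, hT, rfl⟩)
  rintro _ ⟨-, -, -, T', -, rfl⟩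
  exact Set.ncard_le_ncard T'.edgeSet_subset (Set.toFinite _)

namespace SteinerEccCounterexample

def edges : Finset (Sym2 (Fin 9)) :=
  {s(0, 1), s(1, 2), s(2, 3), s(3, 4), s(4, 5), s(5, 6), s(6, 0), s(0, 7), s(2, 8)}

def graph : SimpleGraph (Fin 9) := SimpleGraph.fromEdgeSet edges

instance : DecidableRel graph.Adj := fun a b =>
  inferInstanceAs (Decidable (s(a, b) ∈ edges ∧ a ≠ b))

theorem edgeSet_graph : graph.edgeSet = edges := by
  rw [graph, edgeSet_fromEdgeSet, sdiff_eq_left, Set.disjoint_left]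
  decide

theorem ncard_edgeSet_graph : graph.edgeSet.ncard = 9 := by
  rw [edgeSet_graph, Set.ncard_coe_finset]
  rfl

theorem connected_graph : graph.Connected := by
  let p := Walk.ofSupport (G := graph) [7, 0, 1, 2, 8, 2, 3, 4, 5, 6] (by simp) (by decide)
  exact graph.connected_iff_exists_forall_reachable.2
    ⟨7, fun w => ⟨p.takeUntil w (by revert w; decide)⟩⟩

/-- Position on the cycle; a pendant vertex sits at the position of its neighbour. -/
def pos : Fin 9 → Fin 7 := ![0, 1, 2, 3, 4, 5, 6, 0, 2]

/-- `k + 1` is computed in `Fin 7`, so `cycleEdge 6 = s(6, 0)`. -/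
def cycleEdge (k : Fin 7) : Sym2 (Fin 9) :=
  s(k.castLE (by norm_num), (k + 1).castLE (by norm_num))

def arcEdges (i j : Fin 7) : Finset (Sym2 (Fin 9)) := (Finset.Ico i j).image cycleEdge

def coarcEdges (i j : Fin 7) : Finset (Sym2 (Fin 9)) := (Finset.Ico i j)ᶜ.image cycleEdge

/-- The vertices at positions `i + 1, …, j`: for `i < j` the only edges leaving this set are
`cycleEdge i` and `cycleEdge j`. -/
def arc (i j : Fin 7) : Set (Fin 9) := {x | i < pos x ∧ pos x ≤ j}

theorem eq_cycleEdge_of_adj_mem_arc_not_mem_arc : ∀ i j : Fin 7, i < j → ∀ x y : Fin 9,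
    graph.Adj x y → x ∈ arc i j → y ∉ arc i j →
      s(x, y) = cycleEdge i ∨ s(x, y) = cycleEdge j := by
  simp only [arc, Set.mem_ofPred_eq]
  decide

variable {T : graph.Subgraph}

theorem cycleEdge_mem_or (hT : T.Connected) {x y : Fin 9} (hx : x ∈ T.verts)
    (hy : y ∈ T.verts) {i j : Fin 7} (hij : i < j) (hxa : x ∈ arc i j) (hya : y ∉ arc i j) :
    cycleEdge i ∈ T.edgeSet ∨ cycleEdge j ∈ T.edgeSet := by
  obtain ⟨a, b, hab, ha, hb⟩ := hT.exists_adj_mem_not_mem hx hy hxa hya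
  rcases eq_cycleEdge_of_adj_mem_arc_not_mem_arc i j hij a b hab.adj_sub ha hb with h | h
  · exact .inl (h ▸ hab)
  · exact .inr (h ▸ hab)

theorem arcEdges_subset_or_coarcEdges_subset (hT : T.Connected) {x y : Fin 9}
    (hx : x ∈ T.verts) (hy : y ∈ T.verts) :
    ↑(arcEdges (pos y) (pos x)) ⊆ T.edgeSet ∨ ↑(coarcEdges (pos y) (pos x)) ⊆ T.edgeSet := by
  simp only [arcEdges, coarcEdges, Finset.coe_image, Set.image_subset_iff]
  by_contra! h
  obtain ⟨⟨i, hi, hiT⟩, ⟨j, hj, hjT⟩⟩ := h.imp Set.not_subset.1 Set.not_subset.1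
  simp only [Finset.coe_compl, Set.mem_compl_iff, Finset.mem_coe, Finset.mem_Ico, not_and_or,
    not_le, not_lt] at hi hj
  rcases hj with hjy | hxj
  · exact (cycleEdge_mem_or hT hy hx (hjy.trans_le hi.1) ⟨hjy, hi.1⟩
      fun h => absurd h.2 (not_le.2 hi.2)).elim hjT hiT
  · exact (cycleEdge_mem_or hT hx hy (hi.2.trans_le hxj) ⟨hi.2, hxj⟩
      fun h => absurd h.1 (not_lt.2 hi.1)).elim hiT hjT

theorem card_le_ncard_edgeSet {F : Finset (Sym2 (Fin 9))} (hF : ↑F ⊆ T.edgeSet) :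
    F.card ≤ T.edgeSet.ncard := by
  simpa using Set.ncard_le_ncard hF

theorem le_ncard_edgeSet_of_mem_four_seven (hT : T.Connected) (h4 : 4 ∈ T.verts)
    (h7 : 7 ∈ T.verts) :
    4 ≤ T.edgeSet.ncard ∧ (T.edgeSet.ncard ≤ 4 → cycleEdge 4 ∈ T.edgeSet) := by
  have h70 : s(7, 0) ∈ T.edgeSet := hT.mem_edgeSet_of_forall_adj_eq h7 h4 (by decide) (by decide)
  rcases arcEdges_subset_or_coarcEdges_subset hT h4 h7 with h | h
  · have : 5 ≤ T.edgeSet.ncard := (by decide : 5 ≤ (insert s(7, 0) (arcEdges 0 4)).card).trans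
      (card_le_ncard_edgeSet (by push_cast; exact Set.insert_subset h70 h))
    omega
  · refine ⟨(by decide : 4 ≤ (insert s(7, 0) (coarcEdges 0 4)).card).trans
      (card_le_ncard_edgeSet (by push_cast; exact Set.insert_subset h70 h)), fun _ => h ?_⟩
    decide

theorem le_ncard_edgeSet_of_mem_four_seven_eight (hT : T.Connected) (h4 : 4 ∈ T.verts)
    (h7 : 7 ∈ T.verts) (h8 : 8 ∈ T.verts) :
    6 ≤ T.edgeSet.ncard ∧ (T.edgeSet.ncard ≤ 6 → cycleEdge 4 ∉ T.edgeSet) := by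
  have hP : ↑({s(7, 0), s(8, 2)} : Finset (Sym2 (Fin 9))) ⊆ T.edgeSet := by
    push_cast
    exact Set.pair_subset (hT.mem_edgeSet_of_forall_adj_eq h7 h4 (by decide) (by decide))
      (hT.mem_edgeSet_of_forall_adj_eq h8 h4 (by decide) (by decide))
  rcases arcEdges_subset_or_coarcEdges_subset hT h4 h7 with h47 | h47
  · have hF : ↑({s(7, 0), s(8, 2)} ∪ arcEdges 0 4) ⊆ T.edgeSet := by
      rw [Finset.coe_union]; exact Set.union_subset hP h47
    refine ⟨(by decide : 6 ≤ ({s(7, 0), s(8, 2)} ∪ arcEdges 0 4).card).trans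
      (card_le_ncard_edgeSet hF), fun h6 => ?_⟩
    have hTF := Set.eq_of_subset_of_ncard_le hF
      (by rw [Set.ncard_coe_finset]; exact h6.trans (by decide))
    rw [← hTF]
    decide
  · have : 7 ≤ T.edgeSet.ncard := by
      rcases arcEdges_subset_or_coarcEdges_subset hT h4 h8 with h48 | h48
      · refine (by decide : 7 ≤ ({s(7, 0), s(8, 2)} ∪ coarcEdges 0 4 ∪ arcEdges 2 4).card).trans
          (card_le_ncard_edgeSet ?_)
        rw [Finset.coe_union, Finset.coe_union]
        exact Set.union_subset (Set.union_subset hP h47) h48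
      · refine (by decide : 7 ≤ ({s(7, 0), s(8, 2)} ∪ coarcEdges 0 4 ∪ coarcEdges 2 4).card).trans
          (card_le_ncard_edgeSet ?_)
        rw [Finset.coe_union, Finset.coe_union]
        exact Set.union_subset (Set.union_subset hP h47) h48
    omega

theorem ncard_le_three_of_isSteinerTree {x : Fin 9} (hx : x ≠ 7)
    (hT : IsSteinerTree graph ↑({4, x} : Finset (Fin 9)) T) : T.edgeSet.ncard ≤ 3 := by
  have cover : ∀ x : Fin 9, x ≠ 7 → {4, x} ⊆ [4, 3, 2, 1].toFinset ∨
      {4, x} ⊆ [4, 3, 2, 8].toFinset ∨ {4, x} ⊆ [4, 5, 6, 0].toFinset := by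
    decide
  rcases cover x hx with h | h | h
  · exact (hT.ncard_le_of_isChain (l := [4, 3, 2, 1]) (by simp) (by decide) h).trans (by decide)
  · exact (hT.ncard_le_of_isChain (l := [4, 3, 2, 8]) (by simp) (by decide) h).trans (by decide)
  · exact (hT.ncard_le_of_isChain (l := [4, 5, 6, 0]) (by simp) (by decide) h).trans (by decide)

theorem ncard_le_five_of_isSteinerTree {x y : Fin 9}
    (hxy : ({4, x, y} : Finset (Fin 9)) ≠ {4, 7, 8})
    (hT : IsSteinerTree graph ↑({4, x, y} : Finset (Fin 9)) T) : T.edgeSet.ncard ≤ 5 := by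
  have cover : ∀ x y : Fin 9, ({4, x, y} : Finset (Fin 9)) ≠ {4, 7, 8} →
      {4, x, y} ⊆ [4, 3, 2, 1, 0, 7].toFinset ∨ {4, x, y} ⊆ [6, 5, 4, 3, 2, 8].toFinset ∨
      {4, x, y} ⊆ [4, 3, 2, 8, 2, 1, 0].toFinset ∨ {4, x, y} ⊆ [3, 4, 5, 6, 0, 7].toFinset ∨
      {4, x, y} ⊆ [1, 2, 3, 4, 5, 6].toFinset := by
    decide
  rcases cover x y hxy with h | h | h | h | h
  · exact (hT.ncard_le_of_isChain (l := [4, 3, 2, 1, 0, 7]) (by simp) (by decide) h).trans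
      (by decide)
  · exact (hT.ncard_le_of_isChain (l := [6, 5, 4, 3, 2, 8]) (by simp) (by decide) h).trans
      (by decide)
  · exact (hT.ncard_le_of_isChain (l := [4, 3, 2, 8, 2, 1, 0]) (by simp) (by decide) h).trans
      (by decide)
  · exact (hT.ncard_le_of_isChain (l := [3, 4, 5, 6, 0, 7]) (by simp) (by decide) h).trans
      (by decide)
  · exact (hT.ncard_le_of_isChain (l := [1, 2, 3, 4, 5, 6]) (by simp) (by decide) h).trans
      (by decide)

theorem cycleEdge_four_mem_of_isSteinerKEccTree_two (hT : IsSteinerKEccTree graph 2 4 T) :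
    cycleEdge 4 ∈ T.edgeSet := by
  obtain ⟨S, hS, h4S, hST, hn⟩ := hT
  have hecc : 4 ≤ steinerEcc graph 2 4 :=
    le_steinerEcc (S := {4, 7}) rfl (by simp)
      ((exists_connected_of_isChain (l := [4, 5, 6, 0, 7]) (by simp) (by decide) (by decide)).imp
        fun _ h => ⟨h.1, h.2.1⟩)
      fun T' hc hS' => (le_ncard_edgeSet_of_mem_four_seven hc (hS' (by simp)) (hS' (by simp))).1
  obtain ⟨x, hx⟩ :=
    Finset.card_eq_one.1 (by rw [Finset.card_erase_of_mem h4S, hS] : (S.erase 4).card = 1)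
  rw [← Finset.insert_erase h4S, hx] at hST
  obtain rfl : x = 7 := by
    by_contra h7
    have := ncard_le_three_of_isSteinerTree h7 hST
    omega
  refine (le_ncard_edgeSet_of_mem_four_seven hST.1 (hST.2.1 (by simp)) (hST.2.1 (by simp))).2 ?_
  exact (hST.ncard_le_of_isChain (l := [4, 5, 6, 0, 7]) (by simp) (by decide) (by decide)).trans
    (by decide)

theorem cycleEdge_four_not_mem_of_isSteinerKEccTree_three (hT : IsSteinerKEccTree graph 3 4 T) :
    cycleEdge 4 ∉ T.edgeSet := by
  obtain ⟨S, hS, h4S, hST, hn⟩ := hT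
  have hecc : 6 ≤ steinerEcc graph 3 4 :=
    le_steinerEcc (S := {4, 7, 8}) rfl (by simp)
      ((exists_connected_of_isChain (l := [4, 3, 2, 8, 2, 1, 0, 7]) (by simp) (by decide)
        (by decide)).imp fun _ h => ⟨h.1, h.2.1⟩)
      fun T' hc hS' => (le_ncard_edgeSet_of_mem_four_seven_eight hc (hS' (by simp))
        (hS' (by simp)) (hS' (by simp))).1
  obtain ⟨x, y, -, hxy⟩ :=
    Finset.card_eq_two.1 (by rw [Finset.card_erase_of_mem h4S, hS] : (S.erase 4).card = 2)
  rw [← Finset.insert_erase h4S, hxy] at hST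
  obtain h478 : ({4, x, y} : Finset (Fin 9)) = {4, 7, 8} := by
    by_contra h478
    have := ncard_le_five_of_isSteinerTree h478 hST
    omega
  rw [h478] at hST
  refine (le_ncard_edgeSet_of_mem_four_seven_eight hST.1 (hST.2.1 (by simp)) (hST.2.1 (by simp))
    (hST.2.1 (by simp))).2 ?_
  exact (hST.ncard_le_of_isChain (l := [4, 3, 2, 8, 2, 1, 0, 7]) (by simp) (by decide)
    (by decide)).trans (by decide)

end SteinerEccCounterexample

/-- There are a connected unicyclic graph `G` and a vertex `v`
such that no Steiner `3`-ecc `v`-tree of `G` contains a Steiner `2`-ecc `v`-tree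
of `G` as a subgraph. -/
theorem steiner_stmt_11 :
    ∃ (V : Type) (_ : Fintype V) (G : SimpleGraph V) (v : V),
      G.Connected ∧ G.edgeSet.ncard = Fintype.card V ∧
      ∀ T₃ : G.Subgraph, IsSteinerKEccTree G 3 v T₃ →
        ∀ T₂ : G.Subgraph, IsSteinerKEccTree G 2 v T₂ → ¬ T₂ ≤ T₃ := by
  refine ⟨Fin 9, inferInstance, SteinerEccCounterexample.graph, 4,
    SteinerEccCounterexample.connected_graph, ?_, fun T₃ hT₃ T₂ hT₂ hle => ?_⟩
  · rw [SteinerEccCounterexample.ncard_edgeSet_graph, Fintype.card_fin]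
  · exact SteinerEccCounterexample.cycleEdge_four_not_mem_of_isSteinerKEccTree_three hT₃
      (Subgraph.edgeSet_mono hle
        (SteinerEccCounterexample.cycleEdge_four_mem_of_isSteinerKEccTree_two hT₂))
end
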